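/- arXiv:1410.6801 — 2 statements merged into one kernel-verified Lean document; each statement's English description precedes it below -/
import Mathlib

section
/- Let C = AAᵀ be positive semidefinite, Y ∈ ℝ^{n×n} an orthogonal projection, and E₃ ∈ ℝ^{n×n} a matrix whose columns lie in the column span of C and satisfying tr(E₃ᵀ C⁺ E₃) ≤ ε² ‖A − A_k‖_F². Then |tr(Y E₃ Y)| ≤ ε · tr(Y C Y), provided tr(YCY) ≥ ‖A − A_k‖_F². -/
open Matrix

/-- Squared Frobenius norm of a real matrix: `‖M‖_F² = tr(M Mᵀ)`. -/
noncomputable def frobSq {n d : ℕ} (M : Matrix (Fin n) (Fin d) ℝ) : ℝ :=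
  Matrix.trace (M * Mᵀ)

/-- `‖A − A_k‖_F²`: the optimal squared-Frobenius-error of a rank-`k`
approximation of `A` (Eckart–Young). -/
noncomputable def optErr {n d : ℕ} (A : Matrix (Fin n) (Fin d) ℝ) (k : ℕ) : ℝ :=
  sInf {x : ℝ | ∃ B : Matrix (Fin n) (Fin d) ℝ, B.rank ≤ k ∧ x = frobSq (A - B)}

/-- `Cp` satisfies the four Moore–Penrose conditions for `C`. -/
def IsMoorePenrose {n : ℕ} (C Cp : Matrix (Fin n) (Fin n) ℝ) : Prop :=
  C * Cp * C = C ∧ Cp * C * Cp = Cp ∧ (C * Cp)ᵀ = C * Cp ∧ (Cp * C)ᵀ = Cp * C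

lemma tr_mul_transpose_self_nonneg {n d : ℕ} (M : Matrix (Fin n) (Fin d) ℝ) :
    0 ≤ Matrix.trace (M * Mᵀ) := by
  rw [Matrix.trace]
  apply Finset.sum_nonneg
  intro i _
  rw [Matrix.diag_apply, Matrix.mul_apply]
  apply Finset.sum_nonneg
  intro j _
  simp only [Matrix.transpose_apply]
  exact mul_self_nonneg _

lemma mp_unique {n : ℕ} (C P Q : Matrix (Fin n) (Fin n) ℝ)
    (hP : IsMoorePenrose C P) (hQ : IsMoorePenrose C Q) : P = Q := by
  obtain ⟨hP1, hP2, hP3, hP4⟩ := hP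
  obtain ⟨hQ1, hQ2, hQ3, hQ4⟩ := hQ
  have h1 : C * P = C * Q := by
    calc C * P = (C * P)ᵀ := hP3.symm
    _ = Pᵀ * Cᵀ := by rw [Matrix.transpose_mul]
    _ = Pᵀ * (C * Q * C)ᵀ := by rw [hQ1]
    _ = Pᵀ * (Cᵀ * (C * Q)ᵀ) := by rw [Matrix.transpose_mul]
    _ = Pᵀ * Cᵀ * (C * Q) := by rw [hQ3]; simp only [Matrix.mul_assoc]
    _ = (C * P)ᵀ * (C * Q) := by rw [Matrix.transpose_mul]
    _ = C * P * (C * Q) := by rw [hP3]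
    _ = C * P * C * Q := by simp only [Matrix.mul_assoc]
    _ = C * Q := by rw [hP1]
  have h2 : P * C = Q * C := by
    calc P * C = (P * C)ᵀ := hP4.symm
    _ = Cᵀ * Pᵀ := by rw [Matrix.transpose_mul]
    _ = (C * Q * C)ᵀ * Pᵀ := by rw [hQ1]
    _ = (Q * C)ᵀ * Cᵀ * Pᵀ := by simp only [Matrix.transpose_mul, Matrix.mul_assoc]
    _ = Q * C * (Cᵀ * Pᵀ) := by rw [hQ4]; simp only [Matrix.mul_assoc]
    _ = Q * C * (P * C)ᵀ := by rw [Matrix.transpose_mul]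
    _ = Q * C * (P * C) := by rw [hP4]
    _ = Q * (C * P * C) := by simp only [Matrix.mul_assoc]
    _ = Q * C := by rw [hP1]
  calc P = P * C * P := hP2.symm
  _ = P * (C * P) := by simp only [Matrix.mul_assoc]
  _ = P * (C * Q) := by rw [h1]
  _ = P * C * Q := by simp only [Matrix.mul_assoc]
  _ = Q * C * Q := by rw [h2]
  _ = Q := hQ2

lemma mp_symm {n : ℕ} (C Cp : Matrix (Fin n) (Fin n) ℝ) (hC : Cᵀ = C)
    (hCp : IsMoorePenrose C Cp) : Cpᵀ = Cp := by
  refine (mp_unique C Cpᵀ Cp ?_ hCp)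
  obtain ⟨h1, h2, h3, h4⟩ := hCp
  refine ⟨?_, ?_, ?_, ?_⟩
  · have : (C * Cpᵀ * C)ᵀ = Cᵀ * Cp * Cᵀ := by
      simp [Matrix.transpose_mul, Matrix.mul_assoc]
    calc C * Cpᵀ * C = ((C * Cpᵀ * C)ᵀ)ᵀ := by rw [Matrix.transpose_transpose]
    _ = (Cᵀ * Cp * Cᵀ)ᵀ := by rw [this]
    _ = (C * Cp * C)ᵀ := by rw [hC]
    _ = Cᵀ := by rw [h1]
    _ = C := hC
  · have : (Cpᵀ * C * Cpᵀ)ᵀ = Cp * Cᵀ * Cp := by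
      simp [Matrix.transpose_mul, Matrix.mul_assoc]
    calc Cpᵀ * C * Cpᵀ = ((Cpᵀ * C * Cpᵀ)ᵀ)ᵀ := by rw [Matrix.transpose_transpose]
    _ = (Cp * Cᵀ * Cp)ᵀ := by rw [this]
    _ = (Cp * C * Cp)ᵀ := by rw [hC]
    _ = Cpᵀ := by rw [h2]
  · have e : C * Cpᵀ = Cp * C := by
      calc C * Cpᵀ = Cᵀ * Cpᵀ := by rw [hC]
      _ = (Cp * C)ᵀ := by rw [Matrix.transpose_mul]
      _ = Cp * C := h4
    rw [e, h4]
  · have e : Cpᵀ * C = C * Cp := by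
      calc Cpᵀ * C = Cpᵀ * Cᵀ := by rw [hC]
      _ = (C * Cp)ᵀ := by rw [Matrix.transpose_mul]
      _ = C * Cp := h3
    rw [e, h3]

/-- The `E₃` error bound: if `C = AAᵀ`, `Y` is an orthogonal projection with
`tr(YCY) ≥ ‖A − A_k‖_F²`, and `E₃` has columns in the column span of `C` with
`tr(E₃ᵀ C⁺ E₃) ≤ ε²‖A − A_k‖_F²`, then `|tr(Y E₃ Y)| ≤ ε·tr(YCY)`. -/
theorem E3_error_bound {n d : ℕ} (k : ℕ) (ε : ℝ) (hε : 0 ≤ ε)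
    (A : Matrix (Fin n) (Fin d) ℝ)
    (Cp Y E₃ : Matrix (Fin n) (Fin n) ℝ)
    (hCp : IsMoorePenrose (A * Aᵀ) Cp)
    (hYsymm : Yᵀ = Y) (hYidem : Y * Y = Y)
    (hcolspan : ∃ M : Matrix (Fin n) (Fin n) ℝ, E₃ = (A * Aᵀ) * M)
    (hE₃ : Matrix.trace (E₃ᵀ * Cp * E₃) ≤ ε ^ 2 * optErr A k)
    (hY : optErr A k ≤ Matrix.trace (Y * (A * Aᵀ) * Y)) :
    |Matrix.trace (Y * E₃ * Y)| ≤ ε * Matrix.trace (Y * (A * Aᵀ) * Y) := by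
  set C : Matrix (Fin n) (Fin n) ℝ := A * Aᵀ with hCdef
  obtain ⟨h1, h2, h3, h4⟩ := hCp
  have hCsymm : Cᵀ = C := by rw [hCdef, Matrix.transpose_mul, Matrix.transpose_transpose]
  have hCpsymm : Cpᵀ = Cp := mp_symm C Cp hCsymm ⟨h1, h2, h3, h4⟩
  obtain ⟨M₀, hM₀⟩ := hcolspan
  have hE : C * Cp * E₃ = E₃ := by
    rw [hM₀]
    calc C * Cp * (C * M₀) = C * Cp * C * M₀ := by simp only [Matrix.mul_assoc]
    _ = C * M₀ := by rw [h1]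
  -- the bilinear form B X Z = trace (X * Cp * Zᵀ)
  -- nonnegativity of the quadratic form
  have Bnonneg : ∀ X : Matrix (Fin n) (Fin n) ℝ, 0 ≤ Matrix.trace (X * Cp * Xᵀ) := by
    intro X
    have : X * Cp * Xᵀ = (X * Cp * A) * (X * Cp * A)ᵀ := by
      calc X * Cp * Xᵀ = X * (Cp * C * Cp) * Xᵀ := by rw [h2]
      _ = (X * Cp * A) * (Aᵀ * (Cpᵀ * Xᵀ)) := by rw [hCpsymm, hCdef]; simp only [Matrix.mul_assoc]
      _ = (X * Cp * A) * (X * Cp * A)ᵀ := by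
          simp [Matrix.transpose_mul, Matrix.mul_assoc]
    rw [this]
    exact tr_mul_transpose_self_nonneg _
  -- symmetry of the bilinear form
  have Bsymm : ∀ X Z : Matrix (Fin n) (Fin n) ℝ,
      Matrix.trace (Z * Cp * Xᵀ) = Matrix.trace (X * Cp * Zᵀ) := by
    intro X Z
    calc Matrix.trace (Z * Cp * Xᵀ) = Matrix.trace ((Z * Cp * Xᵀ)ᵀ) := (Matrix.trace_transpose _).symm
    _ = Matrix.trace (X * Cpᵀ * Zᵀ) := by simp [Matrix.transpose_mul, Matrix.mul_assoc]
    _ = Matrix.trace (X * Cp * Zᵀ) := by rw [hCpsymm]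
  -- Cauchy–Schwarz
  have CS : ∀ X Z : Matrix (Fin n) (Fin n) ℝ,
      (Matrix.trace (X * Cp * Zᵀ))^2 ≤
        Matrix.trace (X * Cp * Xᵀ) * Matrix.trace (Z * Cp * Zᵀ) := by
    intro X Z
    have key : ∀ t : ℝ, 0 ≤ Matrix.trace (Z * Cp * Zᵀ) * (t * t)
        + (2 * Matrix.trace (X * Cp * Zᵀ)) * t + Matrix.trace (X * Cp * Xᵀ) := by
      intro t
      have h0 := Bnonneg (X + t • Z)
      have expand : (X + t • Z) * Cp * (X + t • Z)ᵀ
          = X * Cp * Xᵀ + t • (X * Cp * Zᵀ) + t • (Z * Cp * Xᵀ) + (t * t) • (Z * Cp * Zᵀ) := by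
        simp only [Matrix.transpose_add, Matrix.transpose_smul, Matrix.add_mul,
          Matrix.mul_add, Matrix.smul_mul, Matrix.mul_smul, smul_smul, smul_add]
        abel
      rw [expand] at h0
      simp only [Matrix.trace_add, Matrix.trace_smul, smul_eq_mul] at h0
      rw [Bsymm X Z] at h0
      nlinarith [h0]
    have := discrim_le_zero key
    rw [discrim] at this
    nlinarith [this]
  have hT0 : 0 ≤ Matrix.trace (Y * C * Y) := by
    have : Y * C * Y = (Y * A) * (Y * A)ᵀ := by
      rw [hCdef, Matrix.transpose_mul, hYsymm]; simp only [Matrix.mul_assoc]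
    rw [this]; exact tr_mul_transpose_self_nonneg _
  -- instantiate CS with X = Y*C, Z = Y*E₃ᵀ
  have hXX : Matrix.trace ((Y * C) * Cp * (Y * C)ᵀ) = Matrix.trace (Y * C * Y) := by
    have : (Y * C) * Cp * (Y * C)ᵀ = Y * (C * Cp * C) * Y := by
      rw [Matrix.transpose_mul, hCsymm, hYsymm]; simp only [Matrix.mul_assoc]
    rw [this, h1]
  have hXZ : Matrix.trace ((Y * C) * Cp * (Y * E₃ᵀ)ᵀ) = Matrix.trace (Y * E₃ * Y) := by
    have : (Y * C) * Cp * (Y * E₃ᵀ)ᵀ = Y * (C * Cp * E₃) * Y := by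
      rw [Matrix.transpose_mul, Matrix.transpose_transpose, hYsymm]; simp only [Matrix.mul_assoc]
    rw [this, hE]
  have hZZ : Matrix.trace ((Y * E₃ᵀ) * Cp * (Y * E₃ᵀ)ᵀ) ≤ Matrix.trace (E₃ᵀ * Cp * E₃) := by
    have e1 : Matrix.trace ((Y * E₃ᵀ) * Cp * (Y * E₃ᵀ)ᵀ)
        = Matrix.trace (E₃ᵀ * Cp * E₃ * Y) := by
      have : (Y * E₃ᵀ) * Cp * (Y * E₃ᵀ)ᵀ = Y * (E₃ᵀ * Cp * E₃ * Y) := by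
        rw [Matrix.transpose_mul, Matrix.transpose_transpose, hYsymm]; simp only [Matrix.mul_assoc]
      rw [this, Matrix.trace_mul_comm]
      congr 1
      simp only [Matrix.mul_assoc, hYidem]
    have e2 : Matrix.trace (E₃ᵀ * Cp * E₃) - Matrix.trace (E₃ᵀ * Cp * E₃ * Y)
        = Matrix.trace (((Aᵀ * Cp * E₃) * (1 - Y)) * ((Aᵀ * Cp * E₃) * (1 - Y))ᵀ) := by
      have hS : E₃ᵀ * Cp * E₃ = (Aᵀ * Cp * E₃)ᵀ * (Aᵀ * Cp * E₃) := by
        calc E₃ᵀ * Cp * E₃ = E₃ᵀ * (Cp * C * Cp) * E₃ := by rw [h2]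
        _ = (E₃ᵀ * Cpᵀ * A) * (Aᵀ * Cp * E₃) := by rw [hCpsymm, hCdef]; simp only [Matrix.mul_assoc]
        _ = (Aᵀ * Cp * E₃)ᵀ * (Aᵀ * Cp * E₃) := by
            simp [Matrix.transpose_mul, Matrix.mul_assoc]
      set W : Matrix (Fin d) (Fin n) ℝ := Aᵀ * Cp * E₃ with hW
      have hproj : (1 - Y)ᵀ = 1 - Y := by
        rw [Matrix.transpose_sub, Matrix.transpose_one, hYsymm]
      have hpi : (1 - Y) * (1 - Y) = 1 - Y := by
        simp only [Matrix.mul_sub, Matrix.sub_mul, Matrix.one_mul, Matrix.mul_one, hYidem]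
        abel
      have : (W * (1 - Y)) * (W * (1 - Y))ᵀ = W * (1 - Y) * Wᵀ := by
        rw [Matrix.transpose_mul, hproj]
        calc W * (1 - Y) * ((1 - Y) * Wᵀ) = W * ((1 - Y) * (1 - Y)) * Wᵀ := by
              simp only [Matrix.mul_assoc]
        _ = W * (1 - Y) * Wᵀ := by rw [hpi]
      rw [this, hS]
      have lhs : Matrix.trace (Wᵀ * W) - Matrix.trace (Wᵀ * W * Y)
          = Matrix.trace (Wᵀ * (W * (1 - Y))) := by
        simp only [Matrix.mul_sub, Matrix.mul_one, Matrix.trace_sub, Matrix.mul_assoc]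
      rw [lhs, Matrix.trace_mul_comm]
    have := tr_mul_transpose_self_nonneg ((Aᵀ * Cp * E₃) * (1 - Y))
    linarith
  have key := CS (Y * C) (Y * E₃ᵀ)
  rw [hXX, hXZ] at key
  set T := Matrix.trace (Y * C * Y) with hT
  set τ := Matrix.trace (Y * E₃ * Y) with hτ
  have hsle : Matrix.trace ((Y * E₃ᵀ) * Cp * (Y * E₃ᵀ)ᵀ) ≤ ε ^ 2 * optErr A k :=
    le_trans hZZ hE₃
  have hsq : τ ^ 2 ≤ (ε * T) ^ 2 := by
    have hZZ0 := Bnonneg (Y * E₃ᵀ)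
    have a1 := mul_le_mul_of_nonneg_left hsle hT0
    have a2 : ε ^ 2 * optErr A k ≤ ε ^ 2 * T := mul_le_mul_of_nonneg_left hY (sq_nonneg ε)
    have a3 := mul_le_mul_of_nonneg_left a2 hT0
    nlinarith [key, a1, a3]
  have := abs_le_of_sq_le_sq' hsq (by positivity)
  exact abs_le.mpr this
end

section
/- Let A ∈ ℝ^{n×d}, m = ⌈k/ε⌉ with 0 < ε < 1, and Z ∈ ℝ^{d×m} have orthonormal columns with ‖A − AZZᵀ‖_F² ≤ (1+ε')‖A − A_m‖_F². Then the k largest singular values of A − AZZᵀ satisfy Σ_{i=1}^k σ_i²(A − AZZᵀ) ≤ (ε + ε')‖A − A_k‖_F². -/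
open Matrix

/-- Sum of the `k` largest absolute eigenvalues of a symmetric real matrix. -/
noncomputable def sumTopAbsEigen {n : ℕ} {E : Matrix (Fin n) (Fin n) ℝ}
    (hE : E.IsHermitian) (k : ℕ) : ℝ :=
  sSup {x : ℝ | ∃ s : Finset (Fin n), s.card = k ∧ x = ∑ i ∈ s, |hE.eigenvalues i|}

lemma conjT {a b : Type*} (M : Matrix a b ℝ) : Mᴴ = Mᵀ := by
  ext i j; simp [conjTranspose_apply]

lemma frobSq_eq_sum {n d : ℕ} (M : Matrix (Fin n) (Fin d) ℝ) :
    frobSq M = ∑ i, ∑ j, (M i j) ^ 2 := by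
  simp [frobSq, Matrix.trace, Matrix.diag, Matrix.mul_apply, sq]

lemma frobSq_nonneg {n d : ℕ} (M : Matrix (Fin n) (Fin d) ℝ) : 0 ≤ frobSq M := by
  rw [frobSq_eq_sum]; positivity

lemma optErr_bddBelow {n d : ℕ} (A : Matrix (Fin n) (Fin d) ℝ) (k : ℕ) :
    BddBelow {x : ℝ | ∃ B : Matrix (Fin n) (Fin d) ℝ, B.rank ≤ k ∧ x = frobSq (A - B)} := by
  refine ⟨0, ?_⟩
  rintro x ⟨B, -, rfl⟩
  exact frobSq_nonneg _

lemma optErr_nonempty {n d : ℕ} (A : Matrix (Fin n) (Fin d) ℝ) (k : ℕ) :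
    {x : ℝ | ∃ B : Matrix (Fin n) (Fin d) ℝ, B.rank ≤ k ∧ x = frobSq (A - B)}.Nonempty :=
  ⟨frobSq (A - 0), 0, by simp [Matrix.rank_zero], rfl⟩

lemma optErr_le {n d : ℕ} (A B : Matrix (Fin n) (Fin d) ℝ) (k : ℕ) (h : B.rank ≤ k) :
    optErr A k ≤ frobSq (A - B) :=
  csInf_le (optErr_bddBelow A k) ⟨B, h, rfl⟩

lemma le_optErr {n d : ℕ} (A : Matrix (Fin n) (Fin d) ℝ) (k : ℕ) (c : ℝ)
    (h : ∀ B : Matrix (Fin n) (Fin d) ℝ, B.rank ≤ k → c ≤ frobSq (A - B)) :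
    c ≤ optErr A k := by
  refine le_csInf (optErr_nonempty A k) ?_
  rintro x ⟨B, hB, rfl⟩
  exact h B hB

lemma optErr_nonneg {n d : ℕ} (A : Matrix (Fin n) (Fin d) ℝ) (k : ℕ) : 0 ≤ optErr A k :=
  le_optErr A k 0 fun B _ => frobSq_nonneg _


/-- rank subadditivity for matrices -/
lemma matrix_rank_add_le {n d : ℕ} (A B : Matrix (Fin n) (Fin d) ℝ) :
    (A + B).rank ≤ A.rank + B.rank := by
  have hr : LinearMap.range (A + B).mulVecLin ≤
      LinearMap.range A.mulVecLin ⊔ LinearMap.range B.mulVecLin := by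
    rintro x ⟨v, rfl⟩
    refine Submodule.mem_sup.2 ⟨A.mulVecLin v, ⟨v, rfl⟩, B.mulVecLin v, ⟨v, rfl⟩, ?_⟩
    simp [Matrix.mulVecLin_apply, Matrix.add_mulVec]
  exact le_trans (Submodule.finrank_mono hr)
    (Submodule.finrank_add_le_finrank_add_finrank _ _)



lemma frobSq_decomp {n d : ℕ} (M : Matrix (Fin n) (Fin d) ℝ)
    (Q : Matrix (Fin d) (Fin d) ℝ) (hs : Qᵀ = Q) (hi : Q * Q = Q) :
    frobSq M = frobSq (M * Q) + frobSq (M * (1 - Q)) := by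
  have h1 : (1 - Q)ᵀ = 1 - Q := by rw [transpose_sub, transpose_one, hs]
  have h2 : (1 - Q) * (1 - Q) = 1 - Q := by
    rw [sub_mul, one_mul, mul_sub, mul_one, hi]; abel
  have e1 : M * Q * (Q * Mᵀ) = M * (Q * Mᵀ) := by
    rw [Matrix.mul_assoc M Q (Q * Mᵀ), ← Matrix.mul_assoc Q Q Mᵀ, hi]
  have e2 : M * (1 - Q) * ((1 - Q) * Mᵀ) = M * ((1 - Q) * Mᵀ) := by
    rw [Matrix.mul_assoc M (1 - Q) ((1 - Q) * Mᵀ), ← Matrix.mul_assoc (1 - Q) (1 - Q) Mᵀ, h2]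
  have hQ1 : Q + (1 - Q) = (1 : Matrix (Fin d) (Fin d) ℝ) := by abel
  have key : (M * Q) * (M * Q)ᵀ + (M * (1 - Q)) * (M * (1 - Q))ᵀ = M * Mᵀ := by
    rw [transpose_mul, transpose_mul, hs, h1, e1, e2, ← Matrix.mul_add,
      ← Matrix.add_mul, hQ1, Matrix.one_mul]
  simp only [frobSq, ← key, trace_add]

lemma frobSq_mul_proj_le {n d : ℕ} (M : Matrix (Fin n) (Fin d) ℝ)
    (Q : Matrix (Fin d) (Fin d) ℝ) (hs : Qᵀ = Q) (hi : Q * Q = Q) :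
    frobSq (M * Q) ≤ frobSq M := by
  rw [frobSq_decomp M Q hs hi]
  have := frobSq_nonneg (M * (1 - Q))
  linarith

/-- left projection version : exact error formula -/
lemma frobSq_sub_proj {n d : ℕ} (E : Matrix (Fin n) (Fin d) ℝ)
    (P : Matrix (Fin n) (Fin n) ℝ) (hs : Pᵀ = P) (hi : P * P = P) :
    frobSq (E - P * E) = frobSq E - Matrix.trace (E * Eᵀ * P) := by
  have expand : (E - P * E) * (E - P * E)ᵀ
      = E * Eᵀ - E * Eᵀ * Pᵀ - P * (E * Eᵀ) + P * (E * Eᵀ * Pᵀ) := by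
    rw [transpose_sub, transpose_mul, Matrix.sub_mul, Matrix.mul_sub, Matrix.mul_sub,
      ← Matrix.mul_assoc E Eᵀ Pᵀ, ← Matrix.mul_assoc (P * E) Eᵀ Pᵀ,
      Matrix.mul_assoc P E Eᵀ, Matrix.mul_assoc P (E * Eᵀ) Pᵀ]
    abel
  rw [frobSq, expand, trace_add, trace_sub, trace_sub]
  have c1 : Matrix.trace (P * (E * Eᵀ)) = Matrix.trace (E * Eᵀ * P) := trace_mul_comm _ _
  have c2 : Matrix.trace (P * (E * Eᵀ * Pᵀ)) = Matrix.trace (E * Eᵀ * P) := by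
    rw [hs, trace_mul_comm P (E * Eᵀ * P), Matrix.mul_assoc (E * Eᵀ) P P, hi]
  have c3 : Matrix.trace (E * Eᵀ * Pᵀ) = Matrix.trace (E * Eᵀ * P) := by rw [hs]
  rw [c1, c2, c3, frobSq]
  ring

section Proj
variable {N : ℕ} {F : Matrix (Fin N) (Fin N) ℝ}

/-- the (real) eigenvector matrix -/
noncomputable def eU (hF : F.IsHermitian) : Matrix (Fin N) (Fin N) ℝ :=
  hF.eigenvectorUnitary

lemma eU_mul (hF : F.IsHermitian) : eU hF * (eU hF)ᵀ = 1 := by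
  have h := (Matrix.mem_unitaryGroup_iff).mp hF.eigenvectorUnitary.2
  rwa [star_eq_conjTranspose, conjT] at h

lemma eU_mul' (hF : F.IsHermitian) : (eU hF)ᵀ * eU hF = 1 :=
  mul_eq_one_comm.mp (eU_mul hF)

lemma spectral (hF : F.IsHermitian) :
    F = eU hF * diagonal hF.eigenvalues * (eU hF)ᵀ := by
  have h := hF.spectral_theorem
  rw [Unitary.conjStarAlgAut_apply, star_eq_conjTranspose, conjT] at h
  convert h using 3 <;> rfl

lemma conjMul (hF : F.IsHermitian) (X Y : Matrix (Fin N) (Fin N) ℝ) :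
    (eU hF * X * (eU hF)ᵀ) * (eU hF * Y * (eU hF)ᵀ) = eU hF * (X * Y) * (eU hF)ᵀ := by
  simp only [Matrix.mul_assoc]
  rw [← Matrix.mul_assoc (eU hF)ᵀ (eU hF) (Y * (eU hF)ᵀ), eU_mul', Matrix.one_mul]

lemma trace_conj (hF : F.IsHermitian) (W : Matrix (Fin N) (Fin N) ℝ) :
    Matrix.trace (eU hF * W * (eU hF)ᵀ) = Matrix.trace W := by
  rw [trace_mul_cycle, eU_mul', Matrix.one_mul]

/-- spectral projection onto the eigenvectors indexed by `s` -/
noncomputable def projOf (hF : F.IsHermitian) (s : Finset (Fin N)) :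
    Matrix (Fin N) (Fin N) ℝ :=
  eU hF * diagonal (fun i => if i ∈ s then (1 : ℝ) else 0) * (eU hF)ᵀ

lemma projOf_transpose (hF : F.IsHermitian) (s : Finset (Fin N)) :
    (projOf hF s)ᵀ = projOf hF s := by
  simp only [projOf, transpose_mul, transpose_transpose, diagonal_transpose, Matrix.mul_assoc]

lemma projOf_idem (hF : F.IsHermitian) (s : Finset (Fin N)) :
    projOf hF s * projOf hF s = projOf hF s := by
  have key : (fun i => (if i ∈ s then (1:ℝ) else 0) * (if i ∈ s then (1:ℝ) else 0))
      = fun i => if i ∈ s then (1:ℝ) else 0 := by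
    funext i; by_cases h : i ∈ s <;> simp [h]
  rw [projOf, conjMul, diagonal_mul_diagonal, key]

lemma rank_projOf_le (hF : F.IsHermitian) (s : Finset (Fin N)) :
    (projOf hF s).rank ≤ s.card := by
  have h1 : (projOf hF s).rank ≤ (diagonal (fun i => if i ∈ s then (1 : ℝ) else 0)).rank := by
    rw [projOf, Matrix.mul_assoc]
    exact le_trans (Matrix.rank_mul_le_right _ _) (Matrix.rank_mul_le_left _ _)
  refine le_trans h1 ?_
  rw [Matrix.rank_diagonal]
  rw [Fintype.card_subtype]
  have : (Finset.univ.filter fun i => (if i ∈ s then (1:ℝ) else 0) ≠ 0) = s := by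
    ext i; by_cases h : i ∈ s <;> simp [h]
  rw [this]

lemma trace_mul_projOf (hF : F.IsHermitian) (s : Finset (Fin N)) :
    Matrix.trace (F * projOf hF s) = ∑ i ∈ s, hF.eigenvalues i := by
  have e0 : F * projOf hF s = (eU hF * diagonal hF.eigenvalues * (eU hF)ᵀ) * projOf hF s := by
    rw [← spectral hF]
  rw [e0, projOf, conjMul, trace_conj, diagonal_mul_diagonal, trace_diagonal]
  rw [Finset.sum_congr rfl (g := fun i => if i ∈ s then hF.eigenvalues i else 0)
    (fun i _ => by by_cases h : i ∈ s <;> simp [h])]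
  simp

lemma projOf_compl (hF : F.IsHermitian) (s : Finset (Fin N)) :
    projOf hF s + projOf hF sᶜ = 1 := by
  have key : (diagonal (fun i => if i ∈ s then (1:ℝ) else 0)
      + diagonal (fun i => if i ∈ sᶜ then (1:ℝ) else 0))
      = (1 : Matrix (Fin N) (Fin N) ℝ) := by
    ext i j
    by_cases hij : i = j
    · subst hij; by_cases h : i ∈ s <;>
        simp [Matrix.add_apply, Matrix.diagonal_apply, Matrix.one_apply, h]
    · simp [Matrix.add_apply, Matrix.diagonal_apply, Matrix.one_apply, hij]
  rw [projOf, projOf, ← Matrix.add_mul, ← Matrix.mul_add, key, Matrix.mul_one, eU_mul]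

/-- diagonal entries of a symmetric idempotent are in [0,1] -/
lemma diag_symm_idem (Q : Matrix (Fin N) (Fin N) ℝ) (hs : Qᵀ = Q) (hi : Q * Q = Q)
    (i : Fin N) : 0 ≤ Q i i ∧ Q i i ≤ 1 := by
  have key : Q i i = ∑ j, (Q i j) ^ 2 := by
    conv_lhs => rw [← hi]
    rw [Matrix.mul_apply]
    refine Finset.sum_congr rfl fun j _ => ?_
    have e : Q j i = Q i j := by
      conv_lhs => rw [← hs]
      rfl
    rw [e, sq]
  constructor
  · rw [key]; positivity
  · have h1 : (Q i i) ^ 2 ≤ ∑ j, (Q i j) ^ 2 :=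
      Finset.single_le_sum (f := fun j => (Q i j)^2) (fun j _ => sq_nonneg _)
        (Finset.mem_univ i)
    nlinarith [key]

lemma trace_diagonal_mul (v : Fin N → ℝ) (M : Matrix (Fin N) (Fin N) ℝ) :
    Matrix.trace (diagonal v * M) = ∑ i, v i * M i i := by
  simp [Matrix.trace, Matrix.diag, Matrix.diagonal_mul]

end Proj

section Sorted
variable {d : ℕ}

/-- sum of `ν i` over indices `i < p` -/
noncomputable def lowSum (ν : Fin d → ℝ) (p : ℕ) : ℝ :=
  ∑ i ∈ Finset.univ.filter (fun i : Fin d => (i : ℕ) < p), ν i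

lemma lowSum_nonneg (ν : Fin d → ℝ) (h0 : ∀ i, 0 ≤ ν i) (p : ℕ) : 0 ≤ lowSum ν p :=
  Finset.sum_nonneg fun i _ => h0 i

lemma lowSum_mono (ν : Fin d → ℝ) (h0 : ∀ i, 0 ≤ ν i) {p q : ℕ} (hpq : p ≤ q) :
    lowSum ν p ≤ lowSum ν q := by
  refine Finset.sum_le_sum_of_subset_of_nonneg ?_ fun i _ _ => h0 i
  intro i hi
  simp only [Finset.mem_filter, Finset.mem_univ, true_and] at hi ⊢
  omega

lemma lowSum_zero (ν : Fin d → ℝ) : lowSum ν 0 = 0 := by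
  simp [lowSum]

lemma strictMono_fin_le {p : ℕ} (f : Fin p → Fin d) (hf : StrictMono f) (i : Fin p) :
    (i : ℕ) ≤ (f i : ℕ) := by
  rcases i with ⟨iv, hi⟩
  induction iv with
  | zero => simp
  | succ v ih =>
    have hv : v < p := lt_trans (Nat.lt_succ_self v) hi
    have h1 : (⟨v, hv⟩ : Fin p) < ⟨v + 1, hi⟩ := by simp [Fin.lt_def]
    have h2 := hf h1
    have h3 := ih hv
    rw [Fin.lt_def] at h2
    simp only at h3 ⊢
    omega

lemma filter_lt_eq_map {p : ℕ} (hpd : p ≤ d) :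
    Finset.univ.filter (fun i : Fin d => (i : ℕ) < p)
      = Finset.map (Fin.castLEEmb hpd) Finset.univ := by
  ext i
  simp only [Finset.mem_filter, Finset.mem_univ, true_and, Finset.mem_map,
    Fin.castLEEmb_apply]
  constructor
  · intro h
    exact ⟨⟨(i : ℕ), h⟩, by ext; simp⟩
  · rintro ⟨j, -, rfl⟩
    simp

lemma lowSum_eq_sum_castLE {p : ℕ} (hpd : p ≤ d) (ν : Fin d → ℝ) :
    lowSum ν p = ∑ i : Fin p, ν (Fin.castLE hpd i) := by
  rw [lowSum, filter_lt_eq_map hpd, Finset.sum_map]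
  rfl

lemma lowSum_le_sum_subset (ν : Fin d → ℝ) (hm : Monotone ν) {p : ℕ}
    (t : Finset (Fin d)) (ht : t.card = p) :
    lowSum ν p ≤ ∑ i ∈ t, ν i := by
  have hpd : p ≤ d := by
    rw [← ht]
    simpa using Finset.card_le_univ t
  have hsum : ∑ i ∈ t, ν i = ∑ i : Fin p, ν (t.orderEmbOfFin ht i) := by
    rw [← Finset.sum_coe_sort t ν,
      ← Equiv.sum_comp (t.orderIsoOfFin ht).toEquiv (fun x : t => ν x)]
    refine Finset.sum_congr rfl fun i _ => ?_
    simp [Finset.coe_orderIsoOfFin_apply]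
  rw [hsum, lowSum_eq_sum_castLE hpd]
  refine Finset.sum_le_sum fun i _ => ?_
  refine hm ?_
  rw [Fin.le_def]
  simpa using strictMono_fin_le _ (t.orderEmbOfFin ht).strictMono i

/-- Ky Fan style exchange argument -/
lemma kyfan {N : ℕ} (lam c : Fin N → ℝ) (hl : ∀ i, 0 ≤ lam i)
    (hc0 : ∀ i, 0 ≤ c i) (hc1 : ∀ i, c i ≤ 1) (p : ℕ) (hsum : ∑ i, c i = (p : ℝ)) :
    ∃ t : Finset (Fin N), t.card = p ∧ ∑ i ∈ t, lam i ≤ ∑ i, c i * lam i := by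
  have hpN : p ≤ N := by
    have : (p : ℝ) ≤ (N : ℝ) := by
      rw [← hsum]
      calc ∑ i, c i ≤ ∑ _i : Fin N, (1:ℝ) := Finset.sum_le_sum fun i _ => hc1 i
        _ = N := by simp
    exact_mod_cast this
  obtain ⟨t, htmem, htmin⟩ := Finset.exists_min_image
    (Finset.univ.powersetCard p) (fun t => ∑ i ∈ t, lam i)
    (Finset.powersetCard_nonempty.2 (by simpa using hpN))
  rw [Finset.mem_powersetCard] at htmem
  obtain ⟨-, htcard⟩ := htmem
  refine ⟨t, htcard, ?_⟩
  rcases Finset.eq_empty_or_nonempty t with rfl | htne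
  · simp only [Finset.sum_empty]
    exact Finset.sum_nonneg fun i _ => mul_nonneg (hc0 i) (hl i)
  -- swap property
  have hswap : ∀ i ∉ t, ∀ j ∈ t, lam j ≤ lam i := by
    intro i hi j hj
    by_contra hcon
    push_neg at hcon
    have hine : i ∉ t.erase j := fun h => hi (Finset.mem_of_mem_erase h)
    have hcard' : (insert i (t.erase j)).card = p := by
      rw [Finset.card_insert_of_notMem hine, Finset.card_erase_of_mem hj, htcard]
      have : 1 ≤ p := by
        rw [← htcard]
        exact Finset.card_pos.2 ⟨j, hj⟩
      omega
    have hmem' : insert i (t.erase j) ∈ Finset.univ.powersetCard p := by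
      rw [Finset.mem_powersetCard]
      exact ⟨Finset.subset_univ _, hcard'⟩
    have hle := htmin _ hmem'
    rw [Finset.sum_insert hine] at hle
    have herase : lam j + ∑ x ∈ t.erase j, lam x = ∑ x ∈ t, lam x :=
      Finset.add_sum_erase t lam hj
    linarith
  set μ := t.sup' htne lam with hμ
  have hub : ∀ j ∈ t, lam j ≤ μ := fun j hj => Finset.le_sup' lam hj
  have hlb : ∀ i ∈ tᶜ, μ ≤ lam i := by
    intro i hi
    obtain ⟨j0, hj0, hj0e⟩ := Finset.exists_mem_eq_sup' htne lam
    rw [hμ, hj0e]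
    exact hswap i (Finset.mem_compl.1 hi) j0 hj0
  have hsplit : ∑ i ∈ t, c i + ∑ i ∈ tᶜ, c i = (p : ℝ) := by
    rw [Finset.sum_add_sum_compl t c] at *
    exact hsum
  have h1 : ∑ i ∈ tᶜ, c i * lam i ≥ (∑ i ∈ tᶜ, c i) * μ := by
    rw [Finset.sum_mul]
    refine Finset.sum_le_sum fun i hi => ?_
    exact mul_le_mul_of_nonneg_left (hlb i hi) (hc0 i)
  have h2 : ∑ i ∈ t, lam i - ∑ i ∈ t, c i * lam i ≤ ((p : ℝ) - ∑ i ∈ t, c i) * μ := by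
    have : ∑ i ∈ t, lam i - ∑ i ∈ t, c i * lam i = ∑ i ∈ t, (1 - c i) * lam i := by
      rw [← Finset.sum_sub_distrib]
      refine Finset.sum_congr rfl fun i _ => by ring
    rw [this]
    have hcard : ((p : ℝ) - ∑ i ∈ t, c i) = ∑ i ∈ t, (1 - c i) := by
      rw [Finset.sum_sub_distrib]
      simp [htcard]
    rw [hcard, Finset.sum_mul]
    refine Finset.sum_le_sum fun i hi => ?_
    exact mul_le_mul_of_nonneg_left (hub i hi) (by linarith [hc1 i])
  have htotal : ∑ i, c i * lam i = ∑ i ∈ t, c i * lam i + ∑ i ∈ tᶜ, c i * lam i :=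
    (Finset.sum_add_sum_compl t _).symm
  have hcc : ∑ i ∈ tᶜ, c i = (p : ℝ) - ∑ i ∈ t, c i := by linarith
  have h1' : ∑ i ∈ tᶜ, c i * lam i ≥ ((p : ℝ) - ∑ i ∈ t, c i) * μ := by
    rw [← hcc]; exact h1
  rw [htotal]
  linarith [h1', h2]

end Sorted

lemma card_filter_Ico {d a b : ℕ} (hbd : b ≤ d) :
    (Finset.univ.filter (fun i : Fin d => a ≤ (i : ℕ) ∧ (i : ℕ) < b)).card = b - a := by
  have h1 : (Finset.univ.filter (fun i : Fin d => a ≤ (i : ℕ) ∧ (i : ℕ) < b)).card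
      = ((Finset.univ.filter (fun i : Fin d => a ≤ (i : ℕ) ∧ (i : ℕ) < b)).image
          Fin.val).card :=
    (Finset.card_image_of_injective _ Fin.val_injective).symm
  have h2 : (Finset.univ.filter (fun i : Fin d => a ≤ (i : ℕ) ∧ (i : ℕ) < b)).image Fin.val
      = Finset.Ico a b := by
    ext x
    simp only [Finset.mem_image, Finset.mem_filter, Finset.mem_univ, true_and,
      Finset.mem_Ico]
    constructor
    · rintro ⟨i, hi, rfl⟩; exact hi
    · rintro ⟨hax, hxb⟩
      exact ⟨⟨x, lt_of_lt_of_le hxb hbd⟩, ⟨hax, hxb⟩, rfl⟩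
  rw [h1, h2, Nat.card_Ico]

/-- the key block-averaging inequality on sorted values -/
lemma block_ineq {d : ℕ} (ν : Fin d → ℝ) (hm : Monotone ν) (h0 : ∀ i, 0 ≤ ν i)
    (k m : ℕ) (hkm : k ≤ m) (ε : ℝ) (hε : 0 < ε) (hkε : (k : ℝ) ≤ ε * m) :
    lowSum ν (d - m) ≤ lowSum ν (d - m - k) + ε * lowSum ν (d - k) := by
  have hz0 : lowSum ν 0 = 0 := by simp [lowSum]
  rcases Nat.eq_zero_or_pos k with rfl | hk1
  · simp only [Nat.sub_zero]
    have h := lowSum_nonneg ν h0 d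
    have := mul_nonneg hε.le h
    linarith
  by_cases hdm : d ≤ m
  · have hz : d - m = 0 := by omega
    rw [hz, hz0]
    exact add_nonneg (lowSum_nonneg _ h0 _) (mul_nonneg hε.le (lowSum_nonneg _ h0 _))
  push_neg at hdm
  set a := d - m - k with ha
  set b := d - m with hb
  set c' := d - k with hc'
  have hab : a ≤ b := by omega
  have hbc : b ≤ c' := by omega
  have hcd : c' ≤ d := by omega
  set B1 := Finset.univ.filter (fun i : Fin d => a ≤ (i : ℕ) ∧ (i : ℕ) < b) with hB1
  set B2 := Finset.univ.filter (fun i : Fin d => b ≤ (i : ℕ) ∧ (i : ℕ) < c') with hB2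
  -- decomposition lowSum b = lowSum a + sum B1
  have hdec : lowSum ν b = lowSum ν a + ∑ i ∈ B1, ν i := by
    rw [lowSum, lowSum, hB1]
    rw [← Finset.sum_filter_add_sum_filter_not
      (Finset.univ.filter (fun i : Fin d => (i : ℕ) < b)) (fun i => (i : ℕ) < a) ν]
    congr 1
    · congr 1
      ext i
      simp only [Finset.mem_filter, Finset.mem_univ, true_and]
      omega
    · congr 1
      ext i
      simp only [Finset.mem_filter, Finset.mem_univ, true_and]
      omega
  -- lowSum c' ≥ sum B1 + sum B2
  have hsub : ∑ i ∈ B1, ν i + ∑ i ∈ B2, ν i ≤ lowSum ν c' := by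
    have hdisj : Disjoint B1 B2 := by
      rw [Finset.disjoint_left]
      intro i hi1 hi2
      simp only [hB1, hB2, Finset.mem_filter, Finset.mem_univ, true_and] at hi1 hi2
      omega
    rw [← Finset.sum_union hdisj]
    refine Finset.sum_le_sum_of_subset_of_nonneg ?_ fun i _ _ => h0 i
    intro i hi
    simp only [Finset.mem_union, hB1, hB2, Finset.mem_filter, Finset.mem_univ, true_and] at hi
    simp only [Finset.mem_filter, Finset.mem_univ, true_and]
    omega
  -- cardinalities
  have hc1 : B1.card ≤ k := by
    rw [hB1, card_filter_Ico (by omega : b ≤ d)]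
    omega
  have hc2 : B2.card = m - k := by
    rw [hB2, card_filter_Ico hcd]
    omega
  -- pairwise domination
  have hdom : ∀ i ∈ B1, ∀ j ∈ B2, ν i ≤ ν j := by
    intro i hi j hj
    simp only [hB1, hB2, Finset.mem_filter, Finset.mem_univ, true_and] at hi hj
    exact hm (by rw [Fin.le_def]; omega)
  -- double counting
  have hdc : (B1.card : ℝ) * ∑ j ∈ B2, ν j ≥ (B2.card : ℝ) * ∑ i ∈ B1, ν i := by
    have expand : ∑ i ∈ B1, ∑ j ∈ B2, (ν j - ν i)
        = (B1.card : ℝ) * ∑ j ∈ B2, ν j - (B2.card : ℝ) * ∑ i ∈ B1, ν i := by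
      simp only [Finset.sum_sub_distrib, Finset.sum_const, nsmul_eq_mul, Finset.mul_sum]
    have pos : 0 ≤ ∑ i ∈ B1, ∑ j ∈ B2, (ν j - ν i) :=
      Finset.sum_nonneg fun i hi => Finset.sum_nonneg fun j hj =>
        sub_nonneg.2 (hdom i hi j hj)
    linarith [pos, expand]
  have hS1 : 0 ≤ ∑ i ∈ B1, ν i := Finset.sum_nonneg fun i _ => h0 i
  have hS2 : 0 ≤ ∑ i ∈ B2, ν i := Finset.sum_nonneg fun i _ => h0 i
  -- conclude S1 ≤ ε (S1 + S2)
  have hm0 : (0 : ℝ) < m := by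
    have : 0 < m := by omega
    exact_mod_cast this
  have hc1R : (B1.card : ℝ) ≤ k := by exact_mod_cast hc1
  have hc2R : (B2.card : ℝ) = (m : ℝ) - k := by
    rw [hc2]
    push_cast [Nat.cast_sub hkm]
    ring
  have h3 : ((m : ℝ) - k) * ∑ i ∈ B1, ν i ≤ (k : ℝ) * ∑ i ∈ B2, ν i := by
    calc ((m : ℝ) - k) * ∑ i ∈ B1, ν i = (B2.card : ℝ) * ∑ i ∈ B1, ν i := by rw [hc2R]
      _ ≤ (B1.card : ℝ) * ∑ j ∈ B2, ν j := hdc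
      _ ≤ (k : ℝ) * ∑ i ∈ B2, ν i := mul_le_mul_of_nonneg_right hc1R hS2
  have hfrac : ∑ i ∈ B1, ν i ≤ ε * (∑ i ∈ B1, ν i + ∑ i ∈ B2, ν i) := by
    nlinarith [mul_le_mul_of_nonneg_right hkε (add_nonneg hS1 hS2), h3, hm0, hS1, hS2]
  have hmul := mul_le_mul_of_nonneg_left hsub hε.le
  linarith [hdec, hfrac, hmul]

section Conj
variable {N : ℕ}

lemma sandwich {n' : ℕ} (A : Matrix (Fin n') (Fin N) ℝ) (X : Matrix (Fin N) (Fin N) ℝ)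
    (hs : Xᵀ = X) (hi : X * X = X) : (A * X) * (A * X)ᵀ = A * X * Aᵀ := by
  rw [transpose_mul, hs, Matrix.mul_assoc A X (X * Aᵀ), ← Matrix.mul_assoc X X Aᵀ, hi,
    ← Matrix.mul_assoc]

lemma conj_transpose_eq (U Q : Matrix (Fin N) (Fin N) ℝ) (hQT : Qᵀ = Q) :
    (Uᵀ * Q * U)ᵀ = Uᵀ * Q * U := by
  rw [transpose_mul, transpose_mul, transpose_transpose, hQT, Matrix.mul_assoc]

lemma conj_idem (U Q : Matrix (Fin N) (Fin N) ℝ) (hU : U * Uᵀ = 1) (hQi : Q * Q = Q) :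
    (Uᵀ * Q * U) * (Uᵀ * Q * U) = Uᵀ * Q * U := by
  calc (Uᵀ * Q * U) * (Uᵀ * Q * U)
      = Uᵀ * (Q * ((U * Uᵀ) * (Q * U))) := by simp only [Matrix.mul_assoc]
    _ = Uᵀ * (Q * (Q * U)) := by rw [hU, Matrix.one_mul]
    _ = Uᵀ * Q * U := by
        rw [← Matrix.mul_assoc Q Q U, hQi]
        simp only [Matrix.mul_assoc]

lemma trace_conj'' (U Q : Matrix (Fin N) (Fin N) ℝ) (hU : U * Uᵀ = 1) :
    Matrix.trace (Uᵀ * Q * U) = Matrix.trace Q := by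
  rw [trace_mul_cycle, hU, Matrix.one_mul]

lemma frobSq_mul_symm_idem {n' : ℕ} (A : Matrix (Fin n') (Fin N) ℝ)
    (X : Matrix (Fin N) (Fin N) ℝ) (hs : Xᵀ = X) (hi : X * X = X) :
    frobSq (A * X) = Matrix.trace ((Aᴴ * A) * X) := by
  rw [frobSq, sandwich A X hs hi, trace_mul_comm (A * X) Aᵀ, ← Matrix.mul_assoc, ← conjT A]

lemma trace_herm_mul_eq {F : Matrix (Fin N) (Fin N) ℝ} (hF : F.IsHermitian)
    (Q : Matrix (Fin N) (Fin N) ℝ) :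
    Matrix.trace (F * Q)
      = ∑ i, hF.eigenvalues i * ((eU hF)ᵀ * Q * eU hF) i i := by
  have h3 : F * Q = (eU hF * diagonal hF.eigenvalues * (eU hF)ᵀ) * Q := by
    rw [← spectral hF]
  have e : (eU hF * diagonal hF.eigenvalues * (eU hF)ᵀ) * Q
      = eU hF * (diagonal hF.eigenvalues * ((eU hF)ᵀ * Q)) := by
    simp only [Matrix.mul_assoc]
  have e2 : (diagonal hF.eigenvalues * ((eU hF)ᵀ * Q)) * eU hF
      = diagonal hF.eigenvalues * ((eU hF)ᵀ * Q * eU hF) := by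
    simp only [Matrix.mul_assoc]
  rw [h3, e, trace_mul_comm (eU hF) (diagonal hF.eigenvalues * ((eU hF)ᵀ * Q)), e2,
    trace_diagonal_mul]

end Conj

section EY
variable {n d : ℕ} (A : Matrix (Fin n) (Fin d) ℝ)

/-- sorted (ascending) eigenvalues of `Aᴴ A` -/
noncomputable def sortedEig : Fin d → ℝ :=
  (isHermitian_conjTranspose_mul_self A).eigenvalues ∘
    ⇑(Tuple.sort (isHermitian_conjTranspose_mul_self A).eigenvalues)

lemma sortedEig_monotone : Monotone (sortedEig A) :=
  Tuple.monotone_sort _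

lemma eig_nonneg (i : Fin d) : 0 ≤ (isHermitian_conjTranspose_mul_self A).eigenvalues i :=
  Matrix.eigenvalues_conjTranspose_mul_self_nonneg A i

lemma sortedEig_nonneg (i : Fin d) : 0 ≤ sortedEig A i := eig_nonneg A _

lemma lowSum_le_sum_eig {p : ℕ} (t : Finset (Fin d)) (ht : t.card = p) :
    lowSum (sortedEig A) p ≤ ∑ i ∈ t, (isHermitian_conjTranspose_mul_self A).eigenvalues i := by
  set σ := Tuple.sort (isHermitian_conjTranspose_mul_self A).eigenvalues with hσ
  have key : ∑ i ∈ t, (isHermitian_conjTranspose_mul_self A).eigenvalues i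
      = ∑ j ∈ t.image σ.symm, sortedEig A j := by
    rw [Finset.sum_image (fun x _ y _ h => σ.symm.injective h)]
    refine Finset.sum_congr rfl fun i _ => ?_
    simp [sortedEig, hσ]
  rw [key]
  exact lowSum_le_sum_subset _ (sortedEig_monotone A)
    _ (by rw [Finset.card_image_of_injective _ σ.symm.injective, ht])

lemma exists_subset_sum_eq {p : ℕ} (hpd : p ≤ d) :
    ∃ t : Finset (Fin d), t.card = p ∧
      ∑ i ∈ t, (isHermitian_conjTranspose_mul_self A).eigenvalues i = lowSum (sortedEig A) p := by
  set σ := Tuple.sort (isHermitian_conjTranspose_mul_self A).eigenvalues with hσ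
  refine ⟨(Finset.univ.filter (fun i : Fin d => (i : ℕ) < p)).image σ, ?_, ?_⟩
  · rw [Finset.card_image_of_injective _ σ.injective, filter_lt_eq_map hpd]
    simp
  · rw [Finset.sum_image (fun x _ y _ h => σ.injective h)]
    rfl

lemma frobSq_mul_projOf (t : Finset (Fin d)) :
    frobSq (A * projOf (isHermitian_conjTranspose_mul_self A) t)
      = ∑ i ∈ t, (isHermitian_conjTranspose_mul_self A).eigenvalues i := by
  rw [frobSq_mul_symm_idem A _ (projOf_transpose _ t) (projOf_idem _ t), trace_mul_projOf]

/-- Eckart–Young, easy direction -/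
lemma optErr_le_lowSum (r : ℕ) : optErr A r ≤ lowSum (sortedEig A) (d - r) := by
  by_cases hr : d ≤ r
  · have hz : d - r = 0 := by omega
    rw [hz, lowSum_zero]
    have hA : A.rank ≤ r := le_trans (Matrix.rank_le_card_width A) (by simpa using hr)
    have := optErr_le A A r hA
    simpa [frobSq] using this
  · push_neg at hr
    set hH := isHermitian_conjTranspose_mul_self A
    obtain ⟨t, htc, hts⟩ := exists_subset_sum_eq A (by omega : d - r ≤ d)
    have hcompl : tᶜ.card = r := by
      rw [Finset.card_compl, htc]
      simp
      omega
    have hrank : (A * projOf hH tᶜ).rank ≤ r := by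
      refine le_trans (Matrix.rank_mul_le_right _ _) ?_
      rw [← hcompl]
      exact rank_projOf_le hH tᶜ
    have hdiff : A - A * projOf hH tᶜ = A * projOf hH t := by
      have h1 : projOf hH t = 1 - projOf hH tᶜ := by
        rw [← projOf_compl hH t]; abel
      rw [h1, Matrix.mul_sub, Matrix.mul_one]
    calc optErr A r ≤ frobSq (A - A * projOf hH tᶜ) := optErr_le A _ r hrank
      _ = frobSq (A * projOf hH t) := by rw [hdiff]
      _ = lowSum (sortedEig A) (d - r) := by rw [frobSq_mul_projOf A t, hts]

/-- Eckart–Young, hard direction -/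
lemma lowSum_le_optErr (r : ℕ) : lowSum (sortedEig A) (d - r) ≤ optErr A r := by
  by_cases hr : d ≤ r
  · have hz : d - r = 0 := by omega
    rw [hz, lowSum_zero]
    exact optErr_nonneg A r
  push_neg at hr
  set p := d - r with hp
  refine le_optErr A r _ (fun B hB => ?_)
  -- kernel subspace
  set e := (WithLp.linearEquiv 2 ℝ (Fin d → ℝ)) with he
  set K := LinearMap.ker B.mulVecLin with hK
  set K' : Submodule ℝ (EuclideanSpace ℝ (Fin d)) := K.map (e.symm : (Fin d → ℝ) →ₗ[ℝ] _)
    with hK'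
  have hfinK : Module.finrank ℝ K' = Module.finrank ℝ K :=
    LinearEquiv.finrank_map_eq e.symm K
  have hdimK : p ≤ Module.finrank ℝ K' := by
    have hrn := LinearMap.finrank_range_add_finrank_ker (B.mulVecLin)
    rw [Module.finrank_fin_fun] at hrn
    have hBr : B.rank = Module.finrank ℝ (LinearMap.range B.mulVecLin) := rfl
    rw [← hK] at hrn
    rw [← hBr] at hrn
    rw [hfinK]
    omega
  set b := stdOrthonormalBasis ℝ K' with hb
  set v : Fin p → (Fin d → ℝ) := fun j => e ((b (Fin.castLE hdimK j)) : EuclideanSpace ℝ (Fin d))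
    with hv
  have hvK : ∀ j, B.mulVec (v j) = 0 := by
    intro j
    obtain ⟨y, hy, hxy⟩ := Submodule.mem_map.1 (SetLike.coe_mem (b (Fin.castLE hdimK j)))
    have hvy : v j = y := by
      rw [hv]
      simp only [← hxy, LinearEquiv.coe_coe, LinearEquiv.apply_symm_apply]
    rw [hvy]
    exact LinearMap.mem_ker.1 hy
  have hortho : ∀ j j' : Fin p, (v j) ⬝ᵥ (v j') = if j = j' then (1:ℝ) else 0 := by
    intro j j'
    have hON := orthonormal_iff_ite.mp b.orthonormal (Fin.castLE hdimK j) (Fin.castLE hdimK j')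
    rw [Submodule.coe_inner] at hON
    rw [PiLp.inner_apply] at hON
    simp only [RCLike.inner_apply, starRingEnd_apply, star_trivial] at hON
    have : ∀ jj : Fin p, ∀ i : Fin d, v jj i = ((b (Fin.castLE hdimK jj) : EuclideanSpace ℝ (Fin d)) i) := by
      intro jj i
      rfl
    rw [dotProduct]
    simp only [this]
    rw [Finset.sum_congr rfl fun x _ => mul_comm _ ((b (Fin.castLE hdimK j') : EuclideanSpace ℝ (Fin d)) x)]
    rw [hON]
    by_cases hjj : j = j'
    · subst hjj; simp
    · have : Fin.castLE hdimK j ≠ Fin.castLE hdimK j' := by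
        intro hcon
        exact hjj (Fin.castLE_injective _ hcon)
      simp [hjj, this]
  set V : Matrix (Fin d) (Fin p) ℝ := Matrix.of (fun i j => v j i) with hV
  have hVtV : Vᵀ * V = 1 := by
    ext j j'
    rw [Matrix.mul_apply]
    simp only [hV, transpose_apply, Matrix.of_apply, Matrix.one_apply]
    rw [← hortho j j', dotProduct]
  have hBV : B * V = 0 := by
    ext i j
    rw [Matrix.mul_apply]
    have := congrFun (hvK j) i
    rw [Matrix.mulVec, dotProduct] at this
    simpa [hV] using this
  set Q := V * Vᵀ with hQ
  have hQT : Qᵀ = Q := by rw [hQ, transpose_mul, transpose_transpose]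
  have hQidem : Q * Q = Q := by
    rw [hQ, Matrix.mul_assoc V Vᵀ (V * Vᵀ), ← Matrix.mul_assoc Vᵀ V Vᵀ, hVtV, Matrix.one_mul]
  have hBQ : B * Q = 0 := by rw [hQ, ← Matrix.mul_assoc, hBV, Matrix.zero_mul]
  have htraceQ : Matrix.trace Q = (p : ℝ) := by
    rw [hQ, trace_mul_comm, hVtV, Matrix.trace_one]
    simp
  -- the sandwich
  have hchain1 : frobSq ((A - B) * Q) ≤ frobSq (A - B) := frobSq_mul_proj_le _ Q hQT hQidem
  have hchain2 : (A - B) * Q = A * Q := by rw [Matrix.sub_mul, hBQ, sub_zero]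
  have hH := isHermitian_conjTranspose_mul_self A
  have hfrobAQ : frobSq (A * Q)
      = ∑ i, hH.eigenvalues i * ((eU hH)ᵀ * Q * eU hH) i i := by
    rw [frobSq_mul_symm_idem A Q hQT hQidem, trace_herm_mul_eq hH Q]
  have hQ'T := conj_transpose_eq (eU hH) Q hQT
  have hQ'idem := conj_idem (eU hH) Q (eU_mul hH) hQidem
  have hsumQ' : ∑ i, ((eU hH)ᵀ * Q * eU hH) i i = (p : ℝ) := by
    have h5 : Matrix.trace ((eU hH)ᵀ * Q * eU hH) = Matrix.trace Q :=
      trace_conj'' (eU hH) Q (eU_mul hH)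
    have h6 : ∑ i, ((eU hH)ᵀ * Q * eU hH) i i = Matrix.trace ((eU hH)ᵀ * Q * eU hH) := rfl
    rw [h6, h5, htraceQ]
  obtain ⟨t, htc, hts⟩ := kyfan hH.eigenvalues (fun i => ((eU hH)ᵀ * Q * eU hH) i i)
    (eig_nonneg A)
    (fun i => (diag_symm_idem _ hQ'T hQ'idem i).1)
    (fun i => (diag_symm_idem _ hQ'T hQ'idem i).2) p hsumQ'
  calc lowSum (sortedEig A) p ≤ ∑ i ∈ t, hH.eigenvalues i := lowSum_le_sum_eig A t htc
    _ ≤ ∑ i, ((eU hH)ᵀ * Q * eU hH) i i * hH.eigenvalues i := hts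
    _ = ∑ i, hH.eigenvalues i * ((eU hH)ᵀ * Q * eU hH) i i :=
        Finset.sum_congr rfl fun i _ => mul_comm _ _
    _ = frobSq (A * Q) := (hfrobAQ).symm
    _ = frobSq ((A - B) * Q) := by rw [hchain2]
    _ ≤ frobSq (A - B) := hchain1
end EY

/-- If `Z ∈ ℝ^{d×m}` with `m = ⌈k/ε⌉` has orthonormal columns and
`‖A − AZZᵀ‖_F² ≤ (1+ε')‖A − A_m‖_F²`, then the sum of the `k` largest squared
singular values of `A − AZZᵀ` (i.e. of the `k` largest absolute eigenvalues of
`(A − AZZᵀ)(A − AZZᵀ)ᵀ`) is at most `(ε + ε')‖A − A_k‖_F²`. -/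
theorem approx_svd_topk_bound {n d : ℕ} (k : ℕ) (ε ε' : ℝ)
    (hε0 : 0 < ε) (hε1 : ε < 1) (hε' : 0 ≤ ε')
    (A : Matrix (Fin n) (Fin d) ℝ)
    (Z : Matrix (Fin d) (Fin (⌈(k : ℝ) / ε⌉₊)) ℝ)
    (hZ : Zᵀ * Z = 1)
    (happrox : frobSq (A - A * Z * Zᵀ) ≤ (1 + ε') * optErr A (⌈(k : ℝ) / ε⌉₊)) :
    ∀ hM : ((A - A * Z * Zᵀ) * (A - A * Z * Zᵀ)ᵀ).IsHermitian,
      sumTopAbsEigen hM k ≤ (ε + ε') * optErr A k := by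
  intro hM
  have hRHS0 : 0 ≤ (ε + ε') * optErr A k :=
    mul_nonneg (by linarith) (optErr_nonneg A k)
  refine Real.sSup_le ?_ hRHS0
  rintro x ⟨s, hs, rfl⟩
  have hl0 : ∀ i, 0 ≤ hM.eigenvalues i := by
    have key : ∀ (M : Matrix (Fin n) (Fin n) ℝ) (hMM : M.IsHermitian),
        M = (A - A * Z * Zᵀ) * (A - A * Z * Zᵀ)ᴴ →
        ∀ i, 0 ≤ hMM.eigenvalues i := by
      rintro M hMM rfl i
      exact Matrix.eigenvalues_self_mul_conjTranspose_nonneg (A - A * Z * Zᵀ) i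
    exact key _ hM (by rw [conjT])
  have habs : ∑ i ∈ s, |hM.eigenvalues i| = ∑ i ∈ s, hM.eigenvalues i :=
    Finset.sum_congr rfl fun i _ => abs_of_nonneg (hl0 i)
  rw [habs]
  have hmk : (k : ℝ) ≤ ε * (⌈(k : ℝ) / ε⌉₊ : ℝ) := by
    have h1 := Nat.le_ceil ((k : ℝ) / ε)
    calc (k : ℝ) = ε * ((k : ℝ) / ε) := by field_simp
      _ ≤ ε * (⌈(k : ℝ) / ε⌉₊ : ℝ) := mul_le_mul_of_nonneg_left h1 hε0.le
  have hkm : k ≤ ⌈(k : ℝ) / ε⌉₊ := by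
    have hmr : (0:ℝ) ≤ ((⌈(k : ℝ) / ε⌉₊ : ℕ) : ℝ) := Nat.cast_nonneg _
    have : (k : ℝ) ≤ ((⌈(k : ℝ) / ε⌉₊ : ℕ) : ℝ) := by nlinarith [hmk]
    exact_mod_cast this
  have hrank : (A * Z * Zᵀ + projOf hM s * (A - A * Z * Zᵀ)).rank
      ≤ ⌈(k : ℝ) / ε⌉₊ + k := by
    refine le_trans (matrix_rank_add_le _ _) (add_le_add ?_ ?_)
    · refine le_trans (Matrix.rank_mul_le_left (A * Z) Zᵀ) ?_
      exact le_trans (Matrix.rank_le_card_width (A * Z)) (by simp)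
    · refine le_trans (Matrix.rank_mul_le_left _ (A - A * Z * Zᵀ)) ?_
      exact le_trans (rank_projOf_le hM s) (le_of_eq hs)
  have hACE : A - (A * Z * Zᵀ + projOf hM s * (A - A * Z * Zᵀ))
      = (A - A * Z * Zᵀ) - projOf hM s * (A - A * Z * Zᵀ) := by abel
  have hstep1 : optErr A (⌈(k : ℝ) / ε⌉₊ + k)
      ≤ frobSq (A - A * Z * Zᵀ) - ∑ i ∈ s, hM.eigenvalues i := by
    have h1 := optErr_le A _ (⌈(k : ℝ) / ε⌉₊ + k) hrank
    rw [hACE, frobSq_sub_proj (A - A * Z * Zᵀ) _ (projOf_transpose hM s) (projOf_idem hM s),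
      trace_mul_projOf hM s] at h1
    exact h1
  have hνmono := sortedEig_monotone A
  have hν0 := sortedEig_nonneg A
  have hU_m : optErr A ⌈(k : ℝ) / ε⌉₊ ≤ lowSum (sortedEig A) (d - ⌈(k : ℝ) / ε⌉₊) :=
    optErr_le_lowSum A _
  have hL_mk : lowSum (sortedEig A) (d - (⌈(k : ℝ) / ε⌉₊ + k))
      ≤ optErr A (⌈(k : ℝ) / ε⌉₊ + k) := lowSum_le_optErr A _
  have hL_k : lowSum (sortedEig A) (d - k) ≤ optErr A k := lowSum_le_optErr A k
  have hblock : lowSum (sortedEig A) (d - ⌈(k : ℝ) / ε⌉₊)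
      ≤ lowSum (sortedEig A) (d - ⌈(k : ℝ) / ε⌉₊ - k)
        + ε * lowSum (sortedEig A) (d - k) :=
    block_ineq (sortedEig A) hνmono hν0 k _ hkm ε hε0 hmk
  have hdd : d - ⌈(k : ℝ) / ε⌉₊ - k = d - (⌈(k : ℝ) / ε⌉₊ + k) := by omega
  rw [hdd] at hblock
  have hmono2 : lowSum (sortedEig A) (d - ⌈(k : ℝ) / ε⌉₊) ≤ lowSum (sortedEig A) (d - k) :=
    lowSum_mono (sortedEig A) hν0 (by omega)
  have hfE : frobSq (A - A * Z * Zᵀ) ≤ (1 + ε') * optErr A ⌈(k : ℝ) / ε⌉₊ := happrox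
  have e1 : (1 + ε') * optErr A ⌈(k : ℝ) / ε⌉₊
      ≤ (1 + ε') * lowSum (sortedEig A) (d - ⌈(k : ℝ) / ε⌉₊) :=
    mul_le_mul_of_nonneg_left hU_m (by linarith)
  have e2 : ε * lowSum (sortedEig A) (d - k)
      + ε' * lowSum (sortedEig A) (d - ⌈(k : ℝ) / ε⌉₊) ≤ (ε + ε') * optErr A k := by
    have h1 : ε' * lowSum (sortedEig A) (d - ⌈(k : ℝ) / ε⌉₊)
        ≤ ε' * lowSum (sortedEig A) (d - k) :=
      mul_le_mul_of_nonneg_left hmono2 hε'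
    have h2 : (ε + ε') * lowSum (sortedEig A) (d - k) ≤ (ε + ε') * optErr A k :=
      mul_le_mul_of_nonneg_left hL_k (by linarith)
    nlinarith [h1, h2]
  linarith [hstep1, hfE, e1, hblock, hL_mk, e2]
end
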